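/- arXiv:1306.6378 — 3 statements merged into one kernel-verified Lean document; each statement's English description precedes it below -/
import Mathlib

section
/- Let N, D be positive natural numbers, let S, S' ∈ ℝ^{N×D} have orthonormal columns, and set Φ := S'Sᵀ. Let Θ : ℝ^N → ℝ be convex with Θ(x) ≥ 0 for all x, let h ∈ ℝ^N, let g be a subgradient of Θ at h, and define h⁺ := Φ( h − λ·(Θ(h)/‖g‖²)·g ) if g ≠ 0 and h⁺ := Φh if g = 0. Set Θ* := inf { Θ(x) : x ∈ Fix(Φ) } and suppose the infimum is attained at some h* ∈ Fix(Φ) (i.e. Θ(h*) = Θ*). If Θ(h) > 0 and 0 ≤ λ ≤ 2(1 − Θ*/Θ(h)), or if g = 0, then ‖h⁺ − h*‖ ≤ ‖h − h*‖ for every h* ∈ Fix(Φ) with Θ(h*) = Θ*. -/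
open Matrix
open scoped RealInnerProductSpace

/-! Since `g` is a subgradient, `⟪h - h*, g⟫ ≥ Θ(h) - Θ*`, and the bound on `λ` keeps the Polyak
step `t g`, `t = λ Θ(h) / ‖g‖²`, short enough that
`‖h - t g - h*‖² = ‖h - h*‖² - t (2⟪h - h*, g⟫ - t‖g‖²) ≤ ‖h - h*‖²`.
The map `Φ = S'Sᵀ` is nonexpansive, being an isometry composed with the adjoint of an isometry,
and it fixes `h*`, so applying it cannot increase the distance to `h*`. -/

theorem LinearMap.norm_adjoint_apply_le_of_norm_map {𝕜 E F : Type*} [RCLike 𝕜]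
    [NormedAddCommGroup E] [InnerProductSpace 𝕜 E] [FiniteDimensional 𝕜 E]
    [NormedAddCommGroup F] [InnerProductSpace 𝕜 F] [FiniteDimensional 𝕜 F]
    {f : E →ₗ[𝕜] F} (hf : ∀ x, ‖f x‖ = ‖x‖) (y : F) : ‖f.adjoint y‖ ≤ ‖y‖ := by
  have key : ‖f.adjoint y‖ ^ 2 ≤ ‖f.adjoint y‖ * ‖y‖ :=
    calc ‖f.adjoint y‖ ^ 2 = RCLike.re (inner 𝕜 (f (f.adjoint y)) y) := by
          rw [← LinearMap.adjoint_inner_right, ← @inner_self_eq_norm_sq 𝕜]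
      _ ≤ ‖f (f.adjoint y)‖ * ‖y‖ := re_inner_le_norm _ _
      _ = ‖f.adjoint y‖ * ‖y‖ := by rw [hf]
  nlinarith [norm_nonneg (f.adjoint y), norm_nonneg y]

namespace Matrix

variable {𝕜 m n : Type*} [RCLike 𝕜] [Fintype m] [Fintype n] [DecidableEq n]

theorem norm_toEuclideanLin_apply_of_conjTranspose_mul_self {A : Matrix m n 𝕜}
    (hA : Aᴴ * A = 1) (x : EuclideanSpace 𝕜 n) : ‖toEuclideanLin A x‖ = ‖x‖ := by
  classical
  refine (LinearMap.norm_map_iff_inner_map_map (toEuclideanLin A)).2 (fun x y => ?_) x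
  rw [← LinearMap.adjoint_inner_right, ← toEuclideanLin_conjTranspose_eq_adjoint,
    ← LinearMap.comp_apply, ← toLpLin_mul_same, hA, toLpLin_one, LinearMap.id_apply]

theorem norm_toEuclideanLin_mul_conjTranspose_apply_le [DecidableEq m] {A B : Matrix m n 𝕜}
    (hA : Aᴴ * A = 1) (hB : Bᴴ * B = 1) (x : EuclideanSpace 𝕜 m) :
    ‖toEuclideanLin (A * Bᴴ) x‖ ≤ ‖x‖ := by
  rw [toLpLin_mul_same, LinearMap.comp_apply,
    norm_toEuclideanLin_apply_of_conjTranspose_mul_self hA, toEuclideanLin_conjTranspose_eq_adjoint]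
  exact LinearMap.norm_adjoint_apply_le_of_norm_map
    (norm_toEuclideanLin_apply_of_conjTranspose_mul_self hB) x

end Matrix

section SubgradientStep

variable {E : Type*} [NormedAddCommGroup E] [InnerProductSpace ℝ E]

theorem norm_sub_smul_le_of_mul_norm_sq_le {u g : E} {t : ℝ} (ht : 0 ≤ t)
    (h : t * ‖g‖ ^ 2 ≤ 2 * ⟪u, g⟫) : ‖u - t • g‖ ≤ ‖u‖ := by
  refine (pow_le_pow_iff_left₀ (norm_nonneg _) (norm_nonneg _) two_ne_zero).1 ?_
  calc ‖u - t • g‖ ^ 2 = ‖u‖ ^ 2 - t * (2 * ⟪u, g⟫ - t * ‖g‖ ^ 2) := by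
        rw [norm_sub_sq_real, real_inner_smul_right, norm_smul, mul_pow, Real.norm_eq_abs,
          sq_abs]
        ring
    _ ≤ ‖u‖ ^ 2 := sub_le_self _ (mul_nonneg ht (sub_nonneg.2 h))

theorem norm_polyak_step_sub_le {Θ : E → ℝ} {h g z : E} {lam : ℝ}
    (hsub : ⟪z - h, g⟫ + Θ h ≤ Θ z) (hpos : 0 < Θ h) (hlam₀ : 0 ≤ lam)
    (hlam : lam ≤ 2 * (1 - Θ z / Θ h)) :
    ‖h - lam • (Θ h / ‖g‖ ^ 2) • g - z‖ ≤ ‖h - z‖ := by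
  have hstep : lam * (Θ h / ‖g‖ ^ 2) * ‖g‖ ^ 2 ≤ lam * Θ h := by
    rw [mul_assoc]
    refine mul_le_mul_of_nonneg_left ?_ hlam₀
    rcases eq_or_ne ‖g‖ 0 with hg | hg
    · simp [hg, hpos.le]
    · rw [div_mul_cancel₀ _ (pow_ne_zero 2 hg)]
  have hgap : lam * Θ h ≤ 2 * (Θ h - Θ z) := by
    have := mul_le_mul_of_nonneg_right hlam hpos.le
    rwa [mul_assoc, sub_mul, div_mul_cancel₀ _ hpos.ne', one_mul] at this
  have hinner : Θ h - Θ z ≤ ⟪h - z, g⟫ := by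
    rw [← neg_sub, inner_neg_left] at hsub
    linarith
  rw [sub_right_comm, smul_smul]
  exact norm_sub_smul_le_of_mul_norm_sq_le (mul_nonneg hlam₀ (by positivity)) (by linarith)

end SubgradientStep

theorem stmt_9_general (N D : ℕ)
    (S S' : Matrix (Fin N) (Fin D) ℝ)
    (hS : Sᵀ * S = 1) (hS' : S'ᵀ * S' = 1)
    (Θ : EuclideanSpace ℝ (Fin N) → ℝ)
    (h : EuclideanSpace ℝ (Fin N))
    (g : EuclideanSpace ℝ (Fin N))
    (hsub : ∀ x : EuclideanSpace ℝ (Fin N), ⟪x - h, g⟫ + Θ h ≤ Θ x)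
    (lam : ℝ)
    (hplus : EuclideanSpace ℝ (Fin N))
    (hplus_def₁ : g ≠ 0 →
      hplus = toEuclideanLin (S' * Sᵀ) (h - lam • ((Θ h / ‖g‖ ^ 2) • g)))
    (hplus_def₂ : g = 0 → hplus = toEuclideanLin (S' * Sᵀ) h)
    (Tstar : ℝ)
    (hcase : (0 < Θ h ∧ 0 ≤ lam ∧ lam ≤ 2 * (1 - Tstar / Θ h)) ∨ g = 0) :
    ∀ hstar : EuclideanSpace ℝ (Fin N),
      toEuclideanLin (S' * Sᵀ) hstar = hstar → Θ hstar = Tstar →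
      ‖hplus - hstar‖ ≤ ‖h - hstar‖ := by
  intro hstar hfix hmin
  set Φ := toEuclideanLin (S' * Sᵀ)
  have hplus_eq : hplus = Φ (h - lam • (Θ h / ‖g‖ ^ 2) • g) := by
    rcases eq_or_ne g 0 with rfl | hg
    · simpa using hplus_def₂ rfl
    · exact hplus_def₁ hg
  have hΦ : ∀ x, ‖Φ x‖ ≤ ‖x‖ := by
    simp only [Φ, ← conjTranspose_eq_transpose_of_trivial] at hS hS' ⊢
    exact norm_toEuclideanLin_mul_conjTranspose_apply_le hS' hS
  have hstep : ‖h - lam • (Θ h / ‖g‖ ^ 2) • g - hstar‖ ≤ ‖h - hstar‖ := by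
    rcases hcase with ⟨hpos, hlam₀, hlam⟩ | rfl
    · exact norm_polyak_step_sub_le (hsub hstar) hpos hlam₀ (hmin ▸ hlam)
    · simp
  calc ‖hplus - hstar‖ = ‖Φ (h - lam • (Θ h / ‖g‖ ^ 2) • g - hstar)‖ := by
        rw [map_sub, hfix, hplus_eq]
    _ ≤ ‖h - hstar‖ := (hΦ _).trans hstep

/-- Monotone approximation: for `Φ := S'Sᵀ`, convex `Θ ≥ 0`,
a subgradient `g` of `Θ` at `h`, `h⁺ := Φ(h − λ(Θ(h)/‖g‖²)g)` if `g ≠ 0` and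
`h⁺ := Φh` otherwise, and `Θ* := inf_{Fix(Φ)} Θ` attained on `Fix(Φ)`:
if (`Θ(h) > 0` and `0 ≤ λ ≤ 2(1 − Θ*/Θ(h))`) or `g = 0`, then
`‖h⁺ − h*‖ ≤ ‖h − h*‖` for every minimizer `h* ∈ Fix(Φ)` of `Θ` over `Fix(Φ)`. -/
theorem stmt_9 (N D : ℕ) (hN : 0 < N) (hD : 0 < D)
    (S S' : Matrix (Fin N) (Fin D) ℝ)
    (hS : Sᵀ * S = 1) (hS' : S'ᵀ * S' = 1)
    (Θ : EuclideanSpace ℝ (Fin N) → ℝ)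
    (hconv : ConvexOn ℝ Set.univ Θ)
    (hnonneg : ∀ x, 0 ≤ Θ x)
    (h : EuclideanSpace ℝ (Fin N))
    (g : EuclideanSpace ℝ (Fin N))
    (hsub : ∀ x : EuclideanSpace ℝ (Fin N), ⟪x - h, g⟫ + Θ h ≤ Θ x)
    (lam : ℝ)
    (hplus : EuclideanSpace ℝ (Fin N))
    (hplus_def₁ : g ≠ 0 →
      hplus = toEuclideanLin (S' * Sᵀ) (h - lam • ((Θ h / ‖g‖ ^ 2) • g)))
    (hplus_def₂ : g = 0 → hplus = toEuclideanLin (S' * Sᵀ) h)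
    (Tstar : ℝ)
    (hattained : ∃ x : EuclideanSpace ℝ (Fin N),
      toEuclideanLin (S' * Sᵀ) x = x ∧ Θ x = Tstar)
    (hlb : ∀ x : EuclideanSpace ℝ (Fin N), toEuclideanLin (S' * Sᵀ) x = x → Tstar ≤ Θ x)
    (hcase : (0 < Θ h ∧ 0 ≤ lam ∧ lam ≤ 2 * (1 - Tstar / Θ h)) ∨ g = 0) :
    ∀ hstar : EuclideanSpace ℝ (Fin N),
      toEuclideanLin (S' * Sᵀ) hstar = hstar → Θ hstar = Tstar →
      ‖hplus - hstar‖ ≤ ‖h - hstar‖ :=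
  stmt_9_general N D S S' hS hS' Θ h g hsub lam hplus hplus_def₁ hplus_def₂ Tstar hcase
end

section
/- Let N, D be positive natural numbers, let S, S' ∈ ℝ^{N×D} have orthonormal columns, and set Φ := S'Sᵀ. Let Θ : ℝ^N → ℝ be convex with Θ(x) ≥ 0 for all x, let h ∈ ℝ^N, and assume Θ(h) > inf { Θ(x) : x ∈ ℝ^N } ≥ 0. Let g be a subgradient of Θ at h (necessarily g ≠ 0), set Θ* := inf { Θ(x) : x ∈ Fix(Φ) } and assume it is attained at some point of Fix(Φ). For λ with 0 < λ < 2(1 − Θ*/Θ(h)), define h⁺ := Φ( h − λ·(Θ(h)/‖g‖²)·g ). Then ‖h⁺ − h*‖ < ‖h − h*‖ for every h* ∈ Fix(Φ) with Θ(h*) = Θ*. -/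
open Matrix
open scoped RealInnerProductSpace

/-
Φ = S'Sᵀ is nonexpansive: S' is an isometry, and Sᵀ, the adjoint of the isometry S, has operator
norm at most one. Since h* ∈ Fix(Φ), this gives ‖Φ z − h*‖ = ‖Φ (z − h*)‖ ≤ ‖z − h*‖, so it suffices
that the Polyak step z = h − λ(Θ(h)/‖g‖²)g is strictly closer to h* than h. Expanding the square,
with c = λΘ(h)/‖g‖²,
  ‖z − h*‖² = ‖h − h*‖² − c (2⟪h − h*, g⟫ − λΘ(h)),
and the subgradient inequality gives ⟪h − h*, g⟫ ≥ Θ(h) − Θ* > λΘ(h)/2.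
-/

namespace Matrix

open scoped Matrix.Norms.L2Operator

variable {𝕜 m n : Type*} [RCLike 𝕜] [Fintype m] [Fintype n] [DecidableEq n]

lemma norm_toEuclideanLin_le (A : Matrix m n 𝕜) (x : EuclideanSpace 𝕜 n) :
    ‖toEuclideanLin A x‖ ≤ ‖A‖ * ‖x‖ :=
  (toEuclideanLin.trans LinearMap.toContinuousLinearMap A).le_opNorm x

lemma l2_opNorm_le_one_of_conjTranspose_mul_self_eq_one {A : Matrix m n 𝕜} (hA : Aᴴ * A = 1) :
    ‖A‖ ≤ 1 := by
  have h1 : ‖(1 : Matrix n n 𝕜)‖ ≤ 1 := by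
    rw [← l2_opNorm_toEuclideanCLM, map_one]
    exact ContinuousLinearMap.norm_id_le
  have hsq : ‖A‖ * ‖A‖ ≤ 1 := by rw [← l2_opNorm_conjTranspose_mul_self, hA]; exact h1
  nlinarith [norm_nonneg A]

lemma norm_toEuclideanLin_mul_conjTranspose_le [DecidableEq m] {S S' : Matrix m n 𝕜}
    (hS : Sᴴ * S = 1) (hS' : S'ᴴ * S' = 1) (x : EuclideanSpace 𝕜 m) :
    ‖toEuclideanLin (S' * Sᴴ) x‖ ≤ ‖x‖ := by
  have hΦ : ‖S' * Sᴴ‖ ≤ 1 := by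
    refine (l2_opNorm_mul _ _).trans ?_
    rw [l2_opNorm_conjTranspose]
    exact mul_le_one₀ (l2_opNorm_le_one_of_conjTranspose_mul_self_eq_one hS') (norm_nonneg _)
      (l2_opNorm_le_one_of_conjTranspose_mul_self_eq_one hS)
  calc ‖toEuclideanLin (S' * Sᴴ) x‖ ≤ ‖S' * Sᴴ‖ * ‖x‖ := norm_toEuclideanLin_le _ x
    _ ≤ ‖x‖ := mul_le_of_le_one_left (norm_nonneg x) hΦ

end Matrix

lemma norm_sub_polyak_step_sub_lt {E : Type*} [NormedAddCommGroup E] [InnerProductSpace ℝ E]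
    {f : E → ℝ} {h g y : E} (hsub : ∀ x, ⟪x - h, g⟫ + f h ≤ f x) (hfh : 0 < f h)
    {lam : ℝ} (hlam : 0 < lam) (hlam_lt : lam * f h < 2 * (f h - f y)) :
    ‖h - lam • ((f h / ‖g‖ ^ 2) • g) - y‖ < ‖h - y‖ := by
  have hinner : f h - f y ≤ ⟪h - y, g⟫ := by
    have := hsub y
    rw [← neg_sub h y, inner_neg_left] at this
    linarith
  have hg : g ≠ 0 := by
    rintro rfl
    rw [inner_zero_right] at hinner
    linarith [mul_pos hlam hfh]
  have hg2 : 0 < ‖g‖ ^ 2 := by positivity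
  set c := lam * f h / ‖g‖ ^ 2 with hc
  have hcpos : 0 < c := by positivity
  have hcg : c ^ 2 * ‖g‖ ^ 2 = c * (lam * f h) := by rw [hc]; field_simp
  have hexpand : ‖h - lam • ((f h / ‖g‖ ^ 2) • g) - y‖ ^ 2 =
      ‖h - y‖ ^ 2 - c * (2 * ⟪h - y, g⟫ - lam * f h) := by
    rw [smul_smul, ← mul_div_assoc, ← hc, sub_right_comm, norm_sub_sq_real, real_inner_smul_right,
      norm_smul, Real.norm_of_nonneg hcpos.le, mul_pow, hcg]
    ring
  have hdecrease : 0 < c * (2 * ⟪h - y, g⟫ - lam * f h) := mul_pos hcpos (by linarith)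
  refine lt_of_pow_lt_pow_left₀ 2 (norm_nonneg _) ?_
  linarith

theorem stmt_10_general (N D : ℕ)
    (S S' : Matrix (Fin N) (Fin D) ℝ)
    (hS : Sᵀ * S = 1) (hS' : S'ᵀ * S' = 1)
    (Θ : EuclideanSpace ℝ (Fin N) → ℝ)
    (h : EuclideanSpace ℝ (Fin N))
    (hgt : (⨅ x : EuclideanSpace ℝ (Fin N), Θ x) < Θ h)
    (hinf_nonneg : 0 ≤ ⨅ x : EuclideanSpace ℝ (Fin N), Θ x)
    (g : EuclideanSpace ℝ (Fin N))
    (hsub : ∀ x : EuclideanSpace ℝ (Fin N), ⟪x - h, g⟫ + Θ h ≤ Θ x)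
    (Tstar : ℝ)
    (lam : ℝ) (hlam₁ : 0 < lam) (hlam₂ : lam < 2 * (1 - Tstar / Θ h)) :
    ∀ hstar : EuclideanSpace ℝ (Fin N),
      toEuclideanLin (S' * Sᵀ) hstar = hstar → Θ hstar = Tstar →
      ‖toEuclideanLin (S' * Sᵀ) (h - lam • ((Θ h / ‖g‖ ^ 2) • g)) - hstar‖ <
        ‖h - hstar‖ := by
  intro hstar hfix hval
  have hΘh : 0 < Θ h := hinf_nonneg.trans_lt hgt
  have hstep : lam * Θ h < 2 * (Θ h - Θ hstar) := by
    calc lam * Θ h < 2 * (1 - Tstar / Θ h) * Θ h := by gcongr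
      _ = 2 * (Θ h - Θ hstar) := by rw [hval]; field_simp
  rw [← conjTranspose_eq_transpose_of_trivial] at hS hS' hfix ⊢
  calc ‖toEuclideanLin (S' * Sᴴ) (h - lam • ((Θ h / ‖g‖ ^ 2) • g)) - hstar‖
      = ‖toEuclideanLin (S' * Sᴴ) (h - lam • ((Θ h / ‖g‖ ^ 2) • g) - hstar)‖ := by
        rw [map_sub _ _ hstar, hfix]
    _ ≤ ‖h - lam • ((Θ h / ‖g‖ ^ 2) • g) - hstar‖ :=
        norm_toEuclideanLin_mul_conjTranspose_le hS hS' _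
    _ < ‖h - hstar‖ := norm_sub_polyak_step_sub_lt hsub hΘh hlam₁ hstep

/-- Strict monotone approximation: for `Φ := S'Sᵀ`, convex `Θ ≥ 0`
with `Θ(h) > inf_{ℝ^N} Θ ≥ 0`, a subgradient `g` of `Θ` at `h` (necessarily nonzero),
`Θ* := inf_{Fix(Φ)} Θ` attained on `Fix(Φ)`, and `0 < λ < 2(1 − Θ*/Θ(h))`,
the point `h⁺ := Φ(h − λ(Θ(h)/‖g‖²)g)` satisfies `‖h⁺ − h*‖ < ‖h − h*‖`
for every minimizer `h* ∈ Fix(Φ)` of `Θ` over `Fix(Φ)`. -/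
theorem stmt_10 (N D : ℕ) (hN : 0 < N) (hD : 0 < D)
    (S S' : Matrix (Fin N) (Fin D) ℝ)
    (hS : Sᵀ * S = 1) (hS' : S'ᵀ * S' = 1)
    (Θ : EuclideanSpace ℝ (Fin N) → ℝ)
    (hconv : ConvexOn ℝ Set.univ Θ)
    (hnonneg : ∀ x, 0 ≤ Θ x)
    (h : EuclideanSpace ℝ (Fin N))
    (hgt : (⨅ x : EuclideanSpace ℝ (Fin N), Θ x) < Θ h)
    (hinf_nonneg : 0 ≤ ⨅ x : EuclideanSpace ℝ (Fin N), Θ x)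
    (g : EuclideanSpace ℝ (Fin N))
    (hsub : ∀ x : EuclideanSpace ℝ (Fin N), ⟪x - h, g⟫ + Θ h ≤ Θ x)
    (Tstar : ℝ)
    (hattained : ∃ x : EuclideanSpace ℝ (Fin N),
      toEuclideanLin (S' * Sᵀ) x = x ∧ Θ x = Tstar)
    (hlb : ∀ x : EuclideanSpace ℝ (Fin N), toEuclideanLin (S' * Sᵀ) x = x → Tstar ≤ Θ x)
    (lam : ℝ) (hlam₁ : 0 < lam) (hlam₂ : lam < 2 * (1 - Tstar / Θ h)) :
    ∀ hstar : EuclideanSpace ℝ (Fin N),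
      toEuclideanLin (S' * Sᵀ) hstar = hstar → Θ hstar = Tstar →
      ‖toEuclideanLin (S' * Sᵀ) (h - lam • ((Θ h / ‖g‖ ^ 2) • g)) - hstar‖ <
        ‖h - hstar‖ :=
  stmt_10_general N D S S' hS hS' Θ h hgt hinf_nonneg g hsub Tstar lam hlam₁ hlam₂
end

section
/- Let N, D be positive natural numbers. For each k ∈ ℕ let S_k ∈ ℝ^{N×D} have orthonormal columns, and set Φ_k := S_{k+1}S_kᵀ. For each k let Θ_k : ℝ^N → ℝ be convex with Θ_k ≥ 0, let h_0 ∈ ℝ^N, let g_k be a subgradient of Θ_k at h_k, and define recursively h_{k+1} := Φ_k( h_k − λ_k·(Θ_k(h_k)/‖g_k‖²)·g_k ) if g_k ≠ 0 and h_{k+1} := Φ_k h_k otherwise. Suppose: (i) there exist K₀ ∈ ℕ and ω ∈ ℝ^N such that Φ_k ω = ω and Θ_k(ω) = 0 for all k ≥ K₀; (ii) there exist ε₁, ε₂ > 0 with λ_k ∈ [ε₁, 2 − ε₂] for all k; and (iii) the sequence (g_k)_{k∈ℕ} is bounded. Then lim_{k→∞} Θ_k(h_k) = 0. -/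
/-!
With `ω` the common fixed point and zero of `Θ_k` (for `k ≥ K₀`), the subgradient inequality at
`ω` gives `Θ_k(h_k) ≤ ⟪h_k - ω, g_k⟫`. Expanding the square then shows that the relaxed Polyak step
decreases `‖h_k - ω‖²` by at least `λ_k (2 - λ_k) Θ_k(h_k)² / ‖g_k‖² ≥ ε₁ ε₂ Θ_k(h_k)² / G²`, and
`Φ_k = S_{k+1} S_kᵀ` is nonexpansive and fixes `ω`, so it does not undo this progress. Hence
`‖h_k - ω‖²` is eventually decreasing and bounded below, its decrements tend to zero, and so does
`Θ_k(h_k)`.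
-/

open Matrix Filter Topology
open scoped RealInnerProductSpace

namespace Matrix

variable {m n : Type*} [Fintype m] [Fintype n] [DecidableEq m] [DecidableEq n]

lemma inner_toEuclideanLin_left (A : Matrix m n ℝ) (x : EuclideanSpace ℝ n)
    (y : EuclideanSpace ℝ m) :
    ⟪toEuclideanLin A x, y⟫ = ⟪x, toEuclideanLin Aᵀ y⟫ := by
  rw [← conjTranspose_eq_transpose_of_trivial, toEuclideanLin_conjTranspose_eq_adjoint,
    LinearMap.adjoint_inner_right]

lemma norm_toEuclideanLin_of_transpose_mul_self {A : Matrix m n ℝ} (hA : Aᵀ * A = 1)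
    (x : EuclideanSpace ℝ n) : ‖toEuclideanLin A x‖ = ‖x‖ := by
  have hinner : ⟪toEuclideanLin A x, toEuclideanLin A x⟫ = ⟪x, x⟫ := by
    rw [inner_toEuclideanLin_left, ← LinearMap.comp_apply, ← toLpLin_mul, hA, toLpLin_one,
      LinearMap.id_apply]
  rwa [real_inner_self_eq_norm_sq, real_inner_self_eq_norm_sq,
    sq_eq_sq₀ (norm_nonneg _) (norm_nonneg _)] at hinner

lemma norm_toEuclideanLin_transpose_le {A : Matrix m n ℝ} (hA : Aᵀ * A = 1)
    (x : EuclideanSpace ℝ m) : ‖toEuclideanLin Aᵀ x‖ ≤ ‖x‖ := by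
  set y := toEuclideanLin Aᵀ x
  have hy : ‖y‖ ^ 2 ≤ ‖x‖ * ‖y‖ :=
    calc ‖y‖ ^ 2 = ⟪x, toEuclideanLin A y⟫ := by
          rw [← real_inner_self_eq_norm_sq, inner_toEuclideanLin_left, transpose_transpose]
      _ ≤ ‖x‖ * ‖toEuclideanLin A y‖ := real_inner_le_norm _ _
      _ = ‖x‖ * ‖y‖ := by rw [norm_toEuclideanLin_of_transpose_mul_self hA]
  nlinarith [norm_nonneg x, norm_nonneg y]

lemma norm_toEuclideanLin_mul_transpose_le {A B : Matrix m n ℝ} (hA : Aᵀ * A = 1)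
    (hB : Bᵀ * B = 1) (x : EuclideanSpace ℝ m) : ‖toEuclideanLin (A * Bᵀ) x‖ ≤ ‖x‖ := by
  rw [toLpLin_mul, LinearMap.comp_apply, norm_toEuclideanLin_of_transpose_mul_self hA]
  exact norm_toEuclideanLin_transpose_le hB x

end Matrix

section PolyakStep

variable {E : Type*} [NormedAddCommGroup E] [InnerProductSpace ℝ E]

/-- For `g = 0` both sides reduce to `‖u‖²`, since `t / ‖0‖² = 0`. -/
lemma norm_sub_polyak_smul_sq_le {u g : E} {t lam : ℝ} (ht : 0 ≤ t) (hlam : 0 ≤ lam)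
    (htu : t ≤ ⟪u, g⟫) :
    ‖u - (lam * (t / ‖g‖ ^ 2)) • g‖ ^ 2 ≤ ‖u‖ ^ 2 - lam * (2 - lam) * (t ^ 2 / ‖g‖ ^ 2) := by
  have hμ : 0 ≤ lam * (t / ‖g‖ ^ 2) := by positivity
  have hsq : (lam * (t / ‖g‖ ^ 2)) ^ 2 * ‖g‖ ^ 2 = lam ^ 2 * (t ^ 2 / ‖g‖ ^ 2) := by
    rcases eq_or_ne g 0 with rfl | hg
    · simp
    · field_simp
  rw [norm_sub_sq_real, real_inner_smul_right, norm_smul, Real.norm_of_nonneg hμ, mul_pow, hsq]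
  have hlin : lam * (t / ‖g‖ ^ 2) * t ≤ lam * (t / ‖g‖ ^ 2) * ⟪u, g⟫ :=
    mul_le_mul_of_nonneg_left htu hμ
  have ht2 : lam * (t / ‖g‖ ^ 2) * t = lam * (t ^ 2 / ‖g‖ ^ 2) := by ring
  linarith

lemma mul_sq_add_norm_map_polyak_sub_sq_le (Φ : E →ₗ[ℝ] E) (hΦ : ∀ x, ‖Φ x‖ ≤ ‖x‖)
    {ω x g : E} (hω : Φ ω = ω) {t lam ε₁ ε₂ G : ℝ} (ht : 0 ≤ t) (hsub : t ≤ ⟪x - ω, g⟫)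
    (hlam : lam ∈ Set.Icc ε₁ (2 - ε₂)) (hε₁ : 0 ≤ ε₁) (hε₂ : 0 ≤ ε₂) (hg : ‖g‖ ≤ G) :
    ε₁ * ε₂ / G ^ 2 * t ^ 2 + ‖Φ (x - lam • ((t / ‖g‖ ^ 2) • g)) - ω‖ ^ 2 ≤ ‖x - ω‖ ^ 2 := by
  obtain ⟨hlam₁, hlam₂⟩ := hlam
  have hprogress : ε₁ * ε₂ / G ^ 2 * t ^ 2 ≤ lam * (2 - lam) * (t ^ 2 / ‖g‖ ^ 2) := by
    rcases eq_or_ne g 0 with rfl | hg₀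
    · have : t = 0 := le_antisymm (by simpa using hsub) ht
      simp [this]
    have hgpos : 0 < ‖g‖ := norm_pos_iff.mpr hg₀
    calc ε₁ * ε₂ / G ^ 2 * t ^ 2 = ε₁ * ε₂ * (t ^ 2 / G ^ 2) := by ring
      _ ≤ ε₁ * ε₂ * (t ^ 2 / ‖g‖ ^ 2) := by gcongr
      _ ≤ lam * (2 - lam) * (t ^ 2 / ‖g‖ ^ 2) := by gcongr <;> linarith
  have hcontract : ‖Φ (x - lam • ((t / ‖g‖ ^ 2) • g)) - ω‖
      ≤ ‖(x - ω) - (lam * (t / ‖g‖ ^ 2)) • g‖ := by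
    calc ‖Φ (x - lam • ((t / ‖g‖ ^ 2) • g)) - ω‖
        = ‖Φ ((x - ω) - (lam * (t / ‖g‖ ^ 2)) • g)‖ := by
          rw [map_sub, map_sub, map_sub, hω, mul_smul]; abel_nf
      _ ≤ ‖(x - ω) - (lam * (t / ‖g‖ ^ 2)) • g‖ := hΦ _
  have hstep := norm_sub_polyak_smul_sq_le ht (hε₁.trans hlam₁) hsub
  have := pow_le_pow_left₀ (norm_nonneg _) hcontract 2
  linarith

end PolyakStep

lemma tendsto_zero_of_mul_sq_add_le {a u : ℕ → ℝ} {c : ℝ} (hc : 0 < c) (ha : ∀ k, 0 ≤ a k)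
    (h : ∀ k, c * u k ^ 2 + a (k + 1) ≤ a k) : Tendsto u atTop (𝓝 0) := by
  have hanti : Antitone a :=
    antitone_nat_of_succ_le fun k => by nlinarith [h k, sq_nonneg (u k)]
  have hlim := tendsto_atTop_ciInf hanti ⟨0, by rintro _ ⟨k, rfl⟩; exact ha k⟩
  have hdecr : Tendsto (fun k => (a k - a (k + 1)) / c) atTop (𝓝 0) := by
    simpa using (hlim.sub (hlim.comp (tendsto_add_atTop_nat 1))).div_const c
  have hsq : Tendsto (fun k => u k ^ 2) atTop (𝓝 0) :=
    squeeze_zero (fun k => sq_nonneg _)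
      (fun k => by rw [le_div_iff₀ hc]; linarith [h k]) hdecr
  rw [tendsto_zero_iff_abs_tendsto_zero]
  simpa [Function.comp_def, Real.sqrt_sq_eq_abs] using hsq.sqrt

theorem stmt_12_general (N D : ℕ)
    (S : ℕ → Matrix (Fin N) (Fin D) ℝ)
    (hS : ∀ k, (S k)ᵀ * S k = 1)
    (Θ : ℕ → EuclideanSpace ℝ (Fin N) → ℝ)
    (hnonneg : ∀ k x, 0 ≤ Θ k x)
    (lam : ℕ → ℝ)
    (h g : ℕ → EuclideanSpace ℝ (Fin N))
    (hsub : ∀ k, ∀ x : EuclideanSpace ℝ (Fin N), ⟪x - h k, g k⟫ + Θ k (h k) ≤ Θ k x)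
    (hrec₁ : ∀ k, g k ≠ 0 → h (k + 1) =
      toEuclideanLin (S (k + 1) * (S k)ᵀ)
        (h k - lam k • ((Θ k (h k) / ‖g k‖ ^ 2) • g k)))
    (hrec₂ : ∀ k, g k = 0 → h (k + 1) = toEuclideanLin (S (k + 1) * (S k)ᵀ) (h k))
    (K₀ : ℕ) (ω : EuclideanSpace ℝ (Fin N))
    (hω : ∀ k, K₀ ≤ k → toEuclideanLin (S (k + 1) * (S k)ᵀ) ω = ω ∧ Θ k ω = 0)
    (ε₁ ε₂ : ℝ) (hε₁ : 0 < ε₁) (hε₂ : 0 < ε₂)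
    (hlam : ∀ k, lam k ∈ Set.Icc ε₁ (2 - ε₂))
    (hgbdd : ∃ G : ℝ, ∀ k, ‖g k‖ ≤ G) :
    Filter.Tendsto (fun k => Θ k (h k)) Filter.atTop (nhds 0) := by
  obtain ⟨G, hG⟩ := hgbdd
  have hG₁ (k : ℕ) : ‖g k‖ ≤ max G 1 := (hG k).trans (le_max_left _ _)
  have hrec (k : ℕ) : h (k + 1) = toEuclideanLin (S (k + 1) * (S k)ᵀ)
      (h k - lam k • ((Θ k (h k) / ‖g k‖ ^ 2) • g k)) := by
    rcases eq_or_ne (g k) 0 with hg | hg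
    · simp [hrec₂ k hg, hg]
    · exact hrec₁ k hg
  have hdecrease (k : ℕ) (hk : K₀ ≤ k) : ε₁ * ε₂ / max G 1 ^ 2 * Θ k (h k) ^ 2
      + ‖h (k + 1) - ω‖ ^ 2 ≤ ‖h k - ω‖ ^ 2 := by
    obtain ⟨hfix, hzero⟩ := hω k hk
    have hsubω : Θ k (h k) ≤ ⟪h k - ω, g k⟫ := by
      have := hsub k ω
      rw [hzero, ← neg_sub, inner_neg_left] at this
      linarith
    rw [hrec k]
    exact mul_sq_add_norm_map_polyak_sub_sq_le _
      (norm_toEuclideanLin_mul_transpose_le (hS (k + 1)) (hS k)) hfix (hnonneg k (h k)) hsubω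
      (hlam k) hε₁.le hε₂.le (hG₁ k)
  refine (tendsto_add_atTop_iff_nat K₀).mp
    (tendsto_zero_of_mul_sq_add_le (a := fun k => ‖h (k + K₀) - ω‖ ^ 2)
      (c := ε₁ * ε₂ / max G 1 ^ 2) (by positivity)
      (fun k => by positivity) fun k => ?_)
  simpa only [Nat.add_right_comm] using hdecrease (k + K₀) (Nat.le_add_left _ _)

/-- Asymptotic optimality of R-APSM: under the assumptions of
boundedness above, if moreover `λ_k ∈ [ε₁, 2 − ε₂]` for some `ε₁, ε₂ > 0` and the
subgradients `(g_k)` are bounded, then `Θ_k(h_k) → 0`. -/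
theorem stmt_12 (N D : ℕ) (hN : 0 < N) (hD : 0 < D)
    (S : ℕ → Matrix (Fin N) (Fin D) ℝ)
    (hS : ∀ k, (S k)ᵀ * S k = 1)
    (Θ : ℕ → EuclideanSpace ℝ (Fin N) → ℝ)
    (hconv : ∀ k, ConvexOn ℝ Set.univ (Θ k))
    (hnonneg : ∀ k x, 0 ≤ Θ k x)
    (lam : ℕ → ℝ)
    (h g : ℕ → EuclideanSpace ℝ (Fin N))
    (hsub : ∀ k, ∀ x : EuclideanSpace ℝ (Fin N), ⟪x - h k, g k⟫ + Θ k (h k) ≤ Θ k x)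
    (hrec₁ : ∀ k, g k ≠ 0 → h (k + 1) =
      toEuclideanLin (S (k + 1) * (S k)ᵀ)
        (h k - lam k • ((Θ k (h k) / ‖g k‖ ^ 2) • g k)))
    (hrec₂ : ∀ k, g k = 0 → h (k + 1) = toEuclideanLin (S (k + 1) * (S k)ᵀ) (h k))
    (K₀ : ℕ) (ω : EuclideanSpace ℝ (Fin N))
    (hω : ∀ k, K₀ ≤ k → toEuclideanLin (S (k + 1) * (S k)ᵀ) ω = ω ∧ Θ k ω = 0)
    (ε₁ ε₂ : ℝ) (hε₁ : 0 < ε₁) (hε₂ : 0 < ε₂)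
    (hlam : ∀ k, lam k ∈ Set.Icc ε₁ (2 - ε₂))
    (hgbdd : ∃ G : ℝ, ∀ k, ‖g k‖ ≤ G) :
    Filter.Tendsto (fun k => Θ k (h k)) Filter.atTop (nhds 0) :=
  stmt_12_general N D S hS Θ hnonneg lam h g hsub hrec₁ hrec₂ K₀ ω hω ε₁ ε₂ hε₁ hε₂ hlam hgbdd
end
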